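/- Let T and S be continuous surjective self-maps of compact metric spaces X and Y respectively, let μ be a (T×S)-invariant Borel probability measure on X×Y with marginals μ_X on X and μ_Y on Y. Then for all continuous partitions of unity Φ on X and Ψ on Y, max{ h̃_{μ_X}(T,Φ), h̃_{μ_Y}(S,Ψ) } ≤ h̃_μ(T×S, Φ⊗Ψ) ≤ h̃_{μ_X}(T,Φ) + h̃_{μ_Y}(S,Ψ), where Φ⊗Ψ := { (x,y) ↦ φ(x)ψ(y) : φ ∈ Φ, ψ ∈ Ψ } is a partition of unity on X×Y. -/

import Mathlib

open MeasureTheory Filter Set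

/-! ### Partitions of unity -/

/-- A finite partition of unity on `X`: a finite family of functions `X → [0,1]`
summing to `1` everywhere. -/
structure PartUnity (X : Type*) where
  n : ℕ
  f : Fin n → X → ℝ
  nonneg : ∀ i x, 0 ≤ f i x
  le_one : ∀ i x, f i x ≤ 1
  sum_one : ∀ x, ∑ i, f i x = 1

namespace PartUnity

variable {X Y : Type*}

/-- A continuous partition of unity. -/
def Cont [TopologicalSpace X] (Φ : PartUnity X) : Prop := ∀ i, Continuous (Φ.f i)

/-- A measurable partition of unity. -/
def Meas [MeasurableSpace X] (Φ : PartUnity X) : Prop := ∀ i, Measurable (Φ.f i)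

/-- A positive partition of unity. -/
def Pos (Φ : PartUnity X) : Prop := ∀ i x, 0 < Φ.f i x

/-- The join `Φ ∨ Ψ = {φ·ψ : φ ∈ Φ, ψ ∈ Ψ}` of two partitions of unity. -/
def join (Φ Ψ : PartUnity X) : PartUnity X where
  n := Φ.n * Ψ.n
  f k x := Φ.f (finProdFinEquiv.symm k).1 x * Ψ.f (finProdFinEquiv.symm k).2 x
  nonneg k x := mul_nonneg (Φ.nonneg _ x) (Ψ.nonneg _ x)
  le_one k x := mul_le_one₀ (Φ.le_one _ x) (Ψ.nonneg _ x) (Ψ.le_one _ x)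
  sum_one x := by
    rw [← Equiv.sum_comp (finProdFinEquiv : Fin Φ.n × Fin Ψ.n ≃ Fin (Φ.n * Ψ.n))
      (fun k => Φ.f (finProdFinEquiv.symm k).1 x * Ψ.f (finProdFinEquiv.symm k).2 x)]
    simp only [Equiv.symm_apply_apply]
    rw [Fintype.sum_prod_type]
    dsimp only
    rw [← Finset.sum_mul_sum, Φ.sum_one x, Ψ.sum_one x, one_mul]

/-- Pull back a partition of unity by a map: `TΦ = {φ ∘ T : φ ∈ Φ}`. -/
def comp (Φ : PartUnity X) (T : Y → X) : PartUnity Y where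
  n := Φ.n
  f i y := Φ.f i (T y)
  nonneg i y := Φ.nonneg i (T y)
  le_one i y := Φ.le_one i (T y)
  sum_one y := Φ.sum_one (T y)

/-- The trivial partition of unity `{1}`. -/
def triv (X : Type*) : PartUnity X where
  n := 1
  f _ _ := 1
  nonneg _ _ := zero_le_one
  le_one _ _ := le_rfl
  sum_one _ := by simp

/-- `dyn T Φ n` is the dynamical join `Φ₀ⁿ⁻¹ = ⋁_{i=0}^{n-1} TⁱΦ`
(joined with a harmless trivial factor). -/
def dyn (T : X → X) (Φ : PartUnity X) : ℕ → PartUnity X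
  | 0 => triv X
  | n + 1 => Φ.join ((dyn T Φ n).comp T)

/-- The product partition of unity `Φ ⊗ Ψ` on `X × Y`. -/
def prod (Φ : PartUnity X) (Ψ : PartUnity Y) : PartUnity (X × Y) where
  n := Φ.n * Ψ.n
  f k p := Φ.f (finProdFinEquiv.symm k).1 p.1 * Ψ.f (finProdFinEquiv.symm k).2 p.2
  nonneg k p := mul_nonneg (Φ.nonneg _ _) (Ψ.nonneg _ _)
  le_one k p := mul_le_one₀ (Φ.le_one _ _) (Ψ.nonneg _ _) (Ψ.le_one _ _)
  sum_one p := by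
    rw [← Equiv.sum_comp (finProdFinEquiv : Fin Φ.n × Fin Ψ.n ≃ Fin (Φ.n * Ψ.n))
      (fun k => Φ.f (finProdFinEquiv.symm k).1 p.1 * Ψ.f (finProdFinEquiv.symm k).2 p.2)]
    simp only [Equiv.symm_apply_apply]
    rw [Fintype.sum_prod_type]
    dsimp only
    rw [← Finset.sum_mul_sum, Φ.sum_one p.1, Ψ.sum_one p.2, one_mul]

/-- The diameter of a partition of unity: the maximum of the diameters of the
supports of its members. -/
noncomputable def diam [PseudoMetricSpace X] (Φ : PartUnity X) : ℝ :=
  ⨆ i, Metric.diam (tsupport (Φ.f i))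

end PartUnity

/-! ### Metric entropy via partitions of unity -/

variable {X Y : Type*}

/-- The static entropy `H̃_μ(Φ) = Σ_φ ( −μ(φ) log μ(φ) + μ(φ log φ) )`. -/
noncomputable def statEnt [MeasurableSpace X] (μ : Measure X) (Φ : PartUnity X) : ℝ :=
  ∑ i, (-((∫ x, Φ.f i x ∂μ) * Real.log (∫ x, Φ.f i x ∂μ)) +
    ∫ x, Φ.f i x * Real.log (Φ.f i x) ∂μ)

/-- The conditional measure `μ_ψ`, determined by `μ_ψ(φ) = μ(φψ)/μ(ψ)`. -/
noncomputable def condMeas [MeasurableSpace X] (μ : Measure X) (ψ : X → ℝ) : Measure X :=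
  (ENNReal.ofReal (∫ x, ψ x ∂μ))⁻¹ • μ.withDensity (fun x => ENNReal.ofReal (ψ x))

/-- The conditional static entropy `H̃_μ(Φ | Ψ) = Σ_ψ μ(ψ) H̃_{μ_ψ}(Φ)`
(terms with `μ(ψ) = 0` vanish since they are multiplied by `μ(ψ) = 0`). -/
noncomputable def condStatEnt [MeasurableSpace X] (μ : Measure X) (Φ Ψ : PartUnity X) : ℝ :=
  ∑ j, (∫ x, Ψ.f j x ∂μ) * statEnt (condMeas μ (Ψ.f j)) Φ

/-- The local metric entropy `h̃_μ(T,Φ) = lim_n H̃_μ(Φ₀ⁿ⁻¹)/n`. -/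
noncomputable def locEnt [MeasurableSpace X] (T : X → X) (μ : Measure X) (Φ : PartUnity X) : ℝ :=
  Filter.atTop.limsup fun n : ℕ => statEnt μ (PartUnity.dyn T Φ n) / (n : ℝ)

/-- The local conditional metric entropy `h̃_μ(T,Φ|Ψ) = lim_n H̃_μ(Φ₀ⁿ⁻¹|Ψ₀ⁿ⁻¹)/n`. -/
noncomputable def condLocEnt [MeasurableSpace X] (T : X → X) (μ : Measure X)
    (Φ Ψ : PartUnity X) : ℝ :=
  Filter.atTop.limsup fun n : ℕ =>
    condStatEnt μ (PartUnity.dyn T Φ n) (PartUnity.dyn T Ψ n) / (n : ℝ)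

/-- The metric entropy `h̃_μ(T)`: supremum of `h̃_μ(T,Φ)` over continuous
partitions of unity. -/
noncomputable def metEnt [TopologicalSpace X] [MeasurableSpace X]
    (T : X → X) (μ : Measure X) : EReal :=
  ⨆ Φ : {Φ : PartUnity X // Φ.Cont}, ((locEnt T μ Φ.1 : ℝ) : EReal)

/-! ### Topological entropy via partitions of unity -/

/-- The topological static entropy `H̃(Φ) = Σ_φ sup φ`. -/
noncomputable def topStat (Φ : PartUnity X) : ℝ := ∑ i, ⨆ x, Φ.f i x

/-- The local topological entropy `h̃(T,Φ) = lim_n (1/n) log H̃(Φ₀ⁿ⁻¹)`. -/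
noncomputable def topLocEnt (T : X → X) (Φ : PartUnity X) : ℝ :=
  Filter.atTop.limsup fun n : ℕ => Real.log (topStat (PartUnity.dyn T Φ n)) / (n : ℝ)

/-- The topological entropy `h̃_top(T)`: supremum of `h̃(T,Φ)` over continuous
partitions of unity. -/
noncomputable def topEnt [TopologicalSpace X] (T : X → X) : EReal :=
  ⨆ Φ : {Φ : PartUnity X // Φ.Cont}, ((topLocEnt T Φ.1 : ℝ) : EReal)

/-! ### Classical Kolmogorov–Sinai entropy -/

/-- A finite Borel partition of `X` (indexed; atoms may be empty). -/
structure FinBorelPart (X : Type*) [MeasurableSpace X] where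
  n : ℕ
  A : Fin n → Set X
  meas : ∀ i, MeasurableSet (A i)
  disj : ∀ i j, i ≠ j → Disjoint (A i) (A j)
  cover : ⋃ i, A i = Set.univ

/-- Local Kolmogorov–Sinai entropy `h_μ(T,𝒜) = lim_n (1/n) Σ_{A ∈ 𝒜₀ⁿ⁻¹} −μ(A) log μ(A)`. -/
noncomputable def ksLocEnt [MeasurableSpace X] (T : X → X) (μ : Measure X)
    (P : FinBorelPart X) : ℝ :=
  Filter.atTop.limsup fun n : ℕ =>
    (∑ σ : Fin n → Fin P.n,
      Real.negMulLog (μ (⋂ i : Fin n, T^[(i : ℕ)] ⁻¹' P.A (σ i))).toReal) / (n : ℝ)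

/-- The Kolmogorov–Sinai metric entropy `h_μ(T)`. -/
noncomputable def ksEnt [MeasurableSpace X] (T : X → X) (μ : Measure X) : EReal :=
  ⨆ P : FinBorelPart X, ((ksLocEnt T μ P : ℝ) : EReal)

/-! ### Classical topological entropy via open covers -/

/-- A finite open cover of `X`. -/
structure FinOpenCover (X : Type*) [TopologicalSpace X] where
  n : ℕ
  U : Fin n → Set X
  opn : ∀ i, IsOpen (U i)
  cov : ⋃ i, U i = Set.univ

/-- The member `⋂_{i<n} T^{-i} U_{σ(i)}` of the dynamical refinement of a cover. -/
def dynSet (T : X → X) {m : ℕ} (U : Fin m → Set X) (n : ℕ) (σ : Fin n → Fin m) : Set X :=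
  ⋂ i : Fin n, T^[(i : ℕ)] ⁻¹' U (σ i)

/-- Minimal cardinality of a subfamily of `V` covering `S`. -/
noncomputable def coverNum {α : Type*} [Fintype α] (V : α → Set X) (S : Set X) : ℕ :=
  sInf {k | ∃ t : Finset α, t.card = k ∧ S ⊆ ⋃ i ∈ t, V i}

/-- The local classical topological entropy `h(T,𝒰)` of an open cover. -/
noncomputable def covLocEnt [TopologicalSpace X] (T : X → X) (C : FinOpenCover X) : ℝ :=
  Filter.atTop.limsup fun n : ℕ =>
    Real.log ((coverNum (fun σ : Fin n → Fin C.n => dynSet T C.U n σ) Set.univ : ℕ) : ℝ) / (n : ℝ)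

/-- The classical topological entropy `h_top(T)` via open covers. -/
noncomputable def topEntCov [TopologicalSpace X] (T : X → X) : EReal :=
  ⨆ C : FinOpenCover X, ((covLocEnt T C : ℝ) : EReal)

/-! ### Misiurewicz topological tail entropy -/

/-- The local conditional topological entropy `h(𝒰|𝒱)` of two open covers. -/
noncomputable def misCondLoc [TopologicalSpace X] (T : X → X) (CU CV : FinOpenCover X) : ℝ :=
  Filter.atTop.limsup fun n : ℕ =>
    Real.log (((⨆ τ : Fin n → Fin CV.n,
      coverNum (fun σ : Fin n → Fin CU.n => dynSet T CU.U n σ) (dynSet T CV.U n τ) : ℕ)) : ℝ) / (n : ℝ)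

/-- The conditional topological entropy `h(T|𝒱) = sup_𝒰 h(𝒰|𝒱)`. -/
noncomputable def misCond [TopologicalSpace X] (T : X → X) (CV : FinOpenCover X) : EReal :=
  ⨆ CU : FinOpenCover X, ((misCondLoc T CU CV : ℝ) : EReal)

/-- Misiurewicz's topological tail entropy `h*(T) = inf_𝒱 h(T|𝒱)`. -/
noncomputable def misTail [TopologicalSpace X] (T : X → X) : EReal :=
  ⨅ CV : FinOpenCover X, misCond T CV

/-! ### Topological tail entropy via partitions of unity -/

/-- `H̃(Φ|ψ) = Σ_φ sup_{supp ψ} φ`. -/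
noncomputable def condTopStatPU [TopologicalSpace X] (Φ : PartUnity X) (ψ : X → ℝ) : ℝ :=
  ∑ i, ⨆ x ∈ tsupport ψ, Φ.f i x

/-- The weight set `D(Ψ) = {a : inf ψ ≤ a_ψ ≤ sup ψ, Σ a_ψ = 1}`. -/
def weights (Ψ : PartUnity X) : Set (Fin Ψ.n → ℝ) :=
  {a | (∀ j, (⨅ x, Ψ.f j x) ≤ a j ∧ a j ≤ ⨆ x, Ψ.f j x) ∧ ∑ j, a j = 1}

/-- `H̃_n(Φ|Ψ) = sup_{a ∈ D(Ψ₀ⁿ⁻¹)} Σ_ψ a_ψ H̃(Φ₀ⁿ⁻¹|ψ)`. -/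
noncomputable def tailStat [TopologicalSpace X] (T : X → X) (Φ Ψ : PartUnity X) (n : ℕ) : ℝ :=
  sSup {r | ∃ a ∈ weights (PartUnity.dyn T Ψ n),
    r = ∑ j, a j * condTopStatPU (PartUnity.dyn T Φ n) ((PartUnity.dyn T Ψ n).f j)}

/-- The local conditional topological entropy `h̃(Φ|Ψ) = limsup_n (1/n) log H̃_n(Φ|Ψ)`. -/
noncomputable def tailLoc [TopologicalSpace X] (T : X → X) (Φ Ψ : PartUnity X) : ℝ :=
  Filter.atTop.limsup fun n : ℕ => Real.log (tailStat T Φ Ψ n) / (n : ℝ)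

/-- The conditional topological entropy `h̃(T|Ψ) = sup_Φ h̃(Φ|Ψ)` over continuous `Φ`. -/
noncomputable def condTopEntPU [TopologicalSpace X] (T : X → X) (Ψ : PartUnity X) : EReal :=
  ⨆ Φ : {Φ : PartUnity X // Φ.Cont}, ((tailLoc T Φ.1 Ψ : ℝ) : EReal)

/-- The topological tail entropy `h̃*(T) = inf_Ψ h̃(T|Ψ)` over continuous `Ψ`. -/
noncomputable def tailEntPU [TopologicalSpace X] (T : X → X) : EReal :=
  ⨅ Ψ : {Ψ : PartUnity X // Ψ.Cont}, condTopEntPU T Ψ.1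

/-! ### Pressures -/

/-- The Birkhoff sum `S_n g = Σ_{i<n} g ∘ Tⁱ`. -/
def birkhoff (T : X → X) (g : X → ℝ) (n : ℕ) (x : X) : ℝ :=
  ∑ i ∈ Finset.range n, g (T^[i] x)

/-- The static pressure `P̃(T,g,Φ,n) = Σ_{φ ∈ Φ₀ⁿ⁻¹} sup (φ e^{S_n g})`. -/
noncomputable def puPressStat (T : X → X) (g : X → ℝ) (Φ : PartUnity X) (n : ℕ) : ℝ :=
  ∑ i, ⨆ x, (PartUnity.dyn T Φ n).f i x * Real.exp (birkhoff T g n x)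

/-- The local topological pressure `P̃_top(T,g,Φ) = lim_n (1/n) log P̃(T,g,Φ,n)`. -/
noncomputable def puLocPress (T : X → X) (g : X → ℝ) (Φ : PartUnity X) : ℝ :=
  Filter.atTop.limsup fun n : ℕ => Real.log (puPressStat T g Φ n) / (n : ℝ)

/-- The topological pressure `P̃_top(T,g)` via continuous partitions of unity. -/
noncomputable def puTopPress [TopologicalSpace X] (T : X → X) (g : X → ℝ) : EReal :=
  ⨆ Φ : {Φ : PartUnity X // Φ.Cont}, ((puLocPress T g Φ.1 : ℝ) : EReal)

/-- The classical static pressure of an open cover: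
`inf { Σ_{V ∈ 𝒱} sup_V e^{S_n g} : 𝒱 a subcover of 𝒰₀ⁿ⁻¹ }`. -/
noncomputable def covPressStat [TopologicalSpace X] (T : X → X) (g : X → ℝ)
    (C : FinOpenCover X) (n : ℕ) : ℝ :=
  sInf {r | ∃ t : Finset (Fin n → Fin C.n),
    (Set.univ ⊆ ⋃ σ ∈ t, dynSet T C.U n σ) ∧
    r = ∑ σ ∈ t, ⨆ x ∈ dynSet T C.U n σ, Real.exp (birkhoff T g n x)}

/-- The local classical topological pressure of an open cover. -/
noncomputable def covLocPress [TopologicalSpace X] (T : X → X) (g : X → ℝ)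
    (C : FinOpenCover X) : ℝ :=
  Filter.atTop.limsup fun n : ℕ => Real.log (covPressStat T g C n) / (n : ℝ)

/-- The classical topological pressure `P_top(T,g)` via open covers. -/
noncomputable def topPress [TopologicalSpace X] (T : X → X) (g : X → ℝ) : EReal :=
  ⨆ C : FinOpenCover X, ((covLocPress T g C : ℝ) : EReal)

/-! ### Topological tail pressure -/

/-- `P̃_n(T,g,Φ|Ψ) = sup_{a ∈ D(Ψ₀ⁿ⁻¹)} Σ_ψ a_ψ Σ_φ sup_{supp ψ} (φ e^{S_n g})`. -/
noncomputable def tailPressStat [TopologicalSpace X] (T : X → X) (g : X → ℝ)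
    (Φ Ψ : PartUnity X) (n : ℕ) : ℝ :=
  sSup {r | ∃ a ∈ weights (PartUnity.dyn T Ψ n),
    r = ∑ j, a j * ∑ i, ⨆ x ∈ tsupport ((PartUnity.dyn T Ψ n).f j),
      (PartUnity.dyn T Φ n).f i x * Real.exp (birkhoff T g n x)}

/-- The local topological tail pressure `P̃(T,g,Φ|Ψ) = limsup_n (1/n) log P̃_n(T,g,Φ|Ψ)`. -/
noncomputable def tailLocPress [TopologicalSpace X] (T : X → X) (g : X → ℝ)
    (Φ Ψ : PartUnity X) : ℝ :=
  Filter.atTop.limsup fun n : ℕ => Real.log (tailPressStat T g Φ Ψ n) / (n : ℝ)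

/-- The conditional topological pressure `P̃(T,g|Ψ) = sup_Φ P̃(T,g,Φ|Ψ)` over continuous `Φ`. -/
noncomputable def condTopPressPU [TopologicalSpace X] (T : X → X) (g : X → ℝ)
    (Ψ : PartUnity X) : EReal :=
  ⨆ Φ : {Φ : PartUnity X // Φ.Cont}, ((tailLocPress T g Φ.1 Ψ : ℝ) : EReal)

/-- The topological tail pressure `P̃*(T,g) = inf_Ψ P̃(T,g|Ψ)` over continuous `Ψ`. -/
noncomputable def puTailPress [TopologicalSpace X] (T : X → X) (g : X → ℝ) : EReal :=
  ⨅ Ψ : {Ψ : PartUnity X // Ψ.Cont}, condTopPressPU T g Ψ.1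

/-! ### Classical topological tail pressure (Li–Chen–Cheng) -/

/-- The Bowen ball `B(x,ε,n) = {y : d(Tⁱx,Tⁱy) < ε for all 0 ≤ i < n}`. -/
def bowenBall [PseudoMetricSpace X] (T : X → X) (x : X) (ε : ℝ) (n : ℕ) : Set X :=
  {y | ∀ i < n, dist (T^[i] x) (T^[i] y) < ε}

/-- `E` is `(n,δ)`-separated: distinct points `y,z ∈ E` satisfy `d(Tⁱy,Tⁱz) > δ`
for some `0 ≤ i < n`. -/
def IsSep [PseudoMetricSpace X] (T : X → X) (n : ℕ) (δ : ℝ) (E : Finset X) : Prop :=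
  ∀ y ∈ E, ∀ z ∈ E, y ≠ z → ∃ i < n, δ < dist (T^[i] y) (T^[i] z)

/-- `P_n(T,g,δ,ε) = sup_x sup { Σ_{y∈E} e^{S_n g(y)} : E (n,δ)-separated ⊆ B(x,ε,n) }`. -/
noncomputable def sepPress [PseudoMetricSpace X] (T : X → X) (g : X → ℝ)
    (n : ℕ) (δ ε : ℝ) : ℝ :=
  ⨆ x : X, sSup {r | ∃ E : Finset X, ↑E ⊆ bowenBall T x ε n ∧ IsSep T n δ E ∧
    r = ∑ y ∈ E, Real.exp (birkhoff T g n y)}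

/-- The classical topological tail pressure
`P*(T,g) = lim_{ε→0} lim_{δ→0} limsup_n (1/n) log P_n(T,g,δ,ε)`
(the inner limits are monotone, hence given by `inf_ε sup_δ`). -/
noncomputable def tailPress [PseudoMetricSpace X] (T : X → X) (g : X → ℝ) : EReal :=
  ⨅ ε : {ε : ℝ // 0 < ε}, ⨆ δ : {δ : ℝ // 0 < δ},
    Filter.atTop.limsup fun n : ℕ => ((Real.log (sepPress T g n δ.1 ε.1) / (n : ℝ) : ℝ) : EReal)


/-! Both inequalities already hold for the static entropies at every `n`. Up to relabelling,
`(Φ ⊗ Ψ)₀ⁿ⁻¹ = Φ₀ⁿ⁻¹ ⊗ Ψ₀ⁿ⁻¹`, and `A ⊗ B` is the join of the pullbacks of `A` and `B` along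
the two projections, whose entropies for `μ` are those of `A` and `B` for the marginals. Static
entropy increases under joins (the integral log-sum inequality makes `g ↦ -μ(g) log μ(g) +
μ(g log g)` subadditive), and is subadditive under joins: the pointwise term `Σ φ log φ` is
additive, while the masses `μ(φψ)` obey Gibbs' inequality against the product of their marginals.
Dividing by `n`, all quotients lie in `[0, log #Φ + log #Ψ]`, so the inequalities pass to the
`limsup`. -/

open Real

lemma sub_le_mul_log_sub_mul_log {x y : ℝ} (hx : 0 ≤ x) (hy : 0 ≤ y) (hxy : y = 0 → x = 0) :
    x - y ≤ x * log x - x * log y := by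
  rcases hx.eq_or_lt with rfl | hx
  · simpa using hy
  have hy : 0 < y := hy.lt_of_ne fun h => hx.ne' (hxy h.symm)
  have h := one_sub_inv_le_log_of_pos (div_pos hx hy)
  rw [log_div hx.ne' hy.ne', inv_div] at h
  have h' := mul_le_mul_of_nonneg_left h hx.le
  rwa [mul_sub, mul_one, mul_div_cancel₀ _ hx.ne', mul_sub] at h'

lemma abs_mul_log_le_one {g s : ℝ} (hg : 0 ≤ g) (hgs : g ≤ s) (hs : s ≤ 1) :
    |g * log s| ≤ 1 := by
  rcases (hg.trans hgs).eq_or_lt with rfl | hs0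
  · simp
  have hlog : log s ≤ 0 := log_nonpos hs0.le hs
  calc |g * log s| = g * -log s := by
        rw [abs_of_nonpos (mul_nonpos_of_nonneg_of_nonpos hg hlog)]; ring
    _ ≤ s * -log s := mul_le_mul_of_nonneg_right hgs (neg_nonneg.2 hlog)
    _ = |log s * s| := by rw [abs_of_nonpos (mul_nonpos_of_nonpos_of_nonneg hlog hs0.le)]; ring
    _ ≤ 1 := (abs_log_mul_self_lt s hs0 hs).le

section Gibbs

variable {ι κ : Type*} [Fintype ι] [Fintype κ]

theorem sum_mul_log_le_sum_mul_log {p q : ι → ℝ} (hp : ∀ i, 0 ≤ p i) (hq : ∀ i, 0 ≤ q i)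
    (hpq : ∀ i, q i = 0 → p i = 0) (hsum : ∑ i, q i ≤ ∑ i, p i) :
    ∑ i, p i * log (q i) ≤ ∑ i, p i * log (p i) := by
  have h := Finset.sum_le_sum fun i (_ : i ∈ Finset.univ) =>
    sub_le_mul_log_sub_mul_log (hp i) (hq i) (hpq i)
  rw [Finset.sum_sub_distrib, Finset.sum_sub_distrib] at h
  linarith

theorem neg_log_card_le_sum_mul_log {p : ι → ℝ} (hp : ∀ i, 0 ≤ p i) (hsum : ∑ i, p i = 1) :
    -log (Fintype.card ι) ≤ ∑ i, p i * log (p i) := by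
  have hcard : (0 : ℝ) < Fintype.card ι := by
    obtain ⟨i, -, -⟩ := Finset.exists_ne_zero_of_sum_ne_zero (hsum.trans_ne one_ne_zero)
    exact_mod_cast Fintype.card_pos_iff.2 ⟨i⟩
  have h := sum_mul_log_le_sum_mul_log (q := fun _ => (Fintype.card ι : ℝ)⁻¹) hp
    (fun _ => inv_nonneg.2 hcard.le) (fun _ h => absurd h (inv_ne_zero hcard.ne'))
    (by simp [hsum, hcard.ne'])
  rwa [← Finset.sum_mul, hsum, one_mul, log_inv] at h

theorem sum_mul_log_marginals_le {p : ι → κ → ℝ} (hp : ∀ i j, 0 ≤ p i j)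
    (hsum : ∑ i, ∑ j, p i j = 1) :
    ∑ i, (∑ j, p i j) * log (∑ j, p i j) + ∑ j, (∑ i, p i j) * log (∑ i, p i j) ≤
      ∑ i, ∑ j, p i j * log (p i j) := by
  set r := fun i => ∑ j, p i j
  set c := fun j => ∑ i, p i j
  have hpr i j : p i j ≤ r i := Finset.single_le_sum (fun j _ => hp i j) (Finset.mem_univ j)
  have hpc i j : p i j ≤ c j := Finset.single_le_sum (fun i _ => hp i j) (Finset.mem_univ i)
  have hc : ∑ j, c j = 1 := by rw [Finset.sum_comm]; exact hsum
  -- Gibbs' inequality against the product of the marginals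
  have h := sum_mul_log_le_sum_mul_log (ι := ι × κ) (p := fun x => p x.1 x.2)
    (q := fun x => r x.1 * c x.2) (fun x => hp x.1 x.2)
    (fun x => mul_nonneg ((hp x.1 x.2).trans (hpr _ _)) ((hp x.1 x.2).trans (hpc _ _)))
    (fun x hx => (mul_eq_zero.1 hx).elim (fun h => le_antisymm (h ▸ hpr _ _) (hp _ _))
      (fun h => le_antisymm (h ▸ hpc _ _) (hp _ _)))
    (by simp only [Fintype.sum_prod_type, ← Finset.sum_mul_sum, hc, mul_one]; rfl)
  have hsplit i j : p i j * log (r i * c j) = p i j * log (r i) + p i j * log (c j) := by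
    rcases (hp i j).eq_or_lt with h0 | h0
    · simp [← h0]
    rw [log_mul (h0.trans_le (hpr i j)).ne' (h0.trans_le (hpc i j)).ne', mul_add]
  simp only [Fintype.sum_prod_type, hsplit, Finset.sum_add_distrib] at h
  rw [Finset.sum_comm (f := fun i j => p i j * log (c j))] at h
  simp only [← Finset.sum_mul] at h
  exact h

end Gibbs

noncomputable def statEntTerm [MeasurableSpace X] (μ : Measure X) (g : X → ℝ) : ℝ :=
  -((∫ x, g x ∂μ) * log (∫ x, g x ∂μ)) + ∫ x, g x * log (g x) ∂μ

section StatEntTerm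

variable [MeasurableSpace X] {μ : Measure X}

lemma integrable_of_nonneg_of_le_one [IsFiniteMeasure μ] {g : X → ℝ} (hg : Measurable g)
    (h0 : ∀ x, 0 ≤ g x) (h1 : ∀ x, g x ≤ 1) : Integrable g μ :=
  .of_mem_Icc 0 1 hg.aemeasurable (ae_of_all _ fun x => ⟨h0 x, h1 x⟩)

lemma integrable_mul_log_of_le [IsFiniteMeasure μ] {g s : X → ℝ} (hg : Measurable g)
    (hs : Measurable s) (h0 : ∀ x, 0 ≤ g x) (hgs : ∀ x, g x ≤ s x) (hs1 : ∀ x, s x ≤ 1) :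
    Integrable (fun x => g x * log (s x)) μ :=
  .of_bound (hg.mul (measurable_log.comp hs)).aestronglyMeasurable 1
    (ae_of_all _ fun x => abs_mul_log_le_one (h0 x) (hgs x) (hs1 x))

/-- The integral log-sum inequality. -/
theorem mul_log_integral_sub_le [IsFiniteMeasure μ] {g s : X → ℝ} (hg : Measurable g)
    (hs : Measurable s) (h0 : ∀ x, 0 ≤ g x) (hgs : ∀ x, g x ≤ s x) (hs1 : ∀ x, s x ≤ 1) :
    (∫ x, g x ∂μ) * log (∫ x, g x ∂μ) - (∫ x, g x ∂μ) * log (∫ x, s x ∂μ) ≤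
      (∫ x, g x * log (g x) ∂μ) - ∫ x, g x * log (s x) ∂μ := by
  have hg1 x : g x ≤ 1 := (hgs x).trans (hs1 x)
  have hgi : Integrable g μ := integrable_of_nonneg_of_le_one hg h0 hg1
  have hsi : Integrable s μ :=
    integrable_of_nonneg_of_le_one hs (fun x => (h0 x).trans (hgs x)) hs1
  have hgg : Integrable (fun x => g x * log (g x)) μ :=
    integrable_mul_log_of_le hg hg h0 (fun _ => le_rfl) hg1
  have hgs' : Integrable (fun x => g x * log (s x)) μ := integrable_mul_log_of_le hg hs h0 hgs hs1
  set a := ∫ x, g x ∂μ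
  set c := ∫ x, s x ∂μ
  rcases (integral_nonneg h0 : 0 ≤ a).eq_or_lt with ha | ha
  · have hg0 : g =ᵐ[μ] 0 := (integral_eq_zero_iff_of_nonneg h0 hgi).1 ha.symm
    rw [integral_eq_zero_of_ae (hg0.mono fun x hx => by simp [hx]),
      integral_eq_zero_of_ae (hg0.mono fun x hx => by simp [hx]), show a = 0 from ha.symm]
    simp
  have hc : 0 < c := ha.trans_le (integral_mono hgi hsi hgs)
  -- pointwise Gibbs inequality against the weight `(a / c) * s`, whose integral is `a`
  have hpt x : g x - a / c * s x ≤ g x * log (g x) - g x * log (s x) - g x * log (a / c) := by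
    rcases ((h0 x).trans (hgs x)).eq_or_lt with hsx | hsx
    · simp [le_antisymm (hsx ▸ hgs x) (h0 x), ← hsx]
    have h := sub_le_mul_log_sub_mul_log (h0 x) (by positivity : 0 ≤ a / c * s x)
      (fun h => absurd h (by positivity))
    rw [log_mul (div_pos ha hc).ne' hsx.ne'] at h
    linarith
  have h : ∫ x, (g x - a / c * s x) ∂μ ≤
      ∫ x, (g x * log (g x) - g x * log (s x) - g x * log (a / c)) ∂μ :=
    integral_mono (hgi.sub (hsi.const_mul _)) ((hgg.sub hgs').sub (hgi.mul_const _)) hpt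
  have hdiff : Integrable (fun x => g x * log (g x) - g x * log (s x)) μ := hgg.sub hgs'
  rw [integral_sub hgi (hsi.const_mul _), integral_sub hdiff (hgi.mul_const _),
    integral_sub hgg hgs', integral_const_mul, integral_mul_const, div_mul_cancel₀ _ hc.ne',
    log_div ha.ne' hc.ne'] at h
  linarith

lemma statEntTerm_nonneg [IsProbabilityMeasure μ] {g : X → ℝ} (hg : Measurable g)
    (h0 : ∀ x, 0 ≤ g x) (h1 : ∀ x, g x ≤ 1) : 0 ≤ statEntTerm μ g := by
  have h := mul_log_integral_sub_le (μ := μ) hg measurable_const h0 h1 fun _ => le_rfl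
  simp only [integral_const, probReal_univ, smul_eq_mul, mul_one, log_one, mul_zero,
    sub_zero] at h
  unfold statEntTerm
  linarith

lemma statEntTerm_add_le [IsFiniteMeasure μ] {g₁ g₂ : X → ℝ} (h₁ : Measurable g₁)
    (h₂ : Measurable g₂) (h₁0 : ∀ x, 0 ≤ g₁ x) (h₂0 : ∀ x, 0 ≤ g₂ x)
    (hle : ∀ x, g₁ x + g₂ x ≤ 1) :
    statEntTerm μ (fun x => g₁ x + g₂ x) ≤ statEntTerm μ g₁ + statEntTerm μ g₂ := by
  have h₁s x : g₁ x ≤ g₁ x + g₂ x := le_add_of_nonneg_right (h₂0 x)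
  have h₂s x : g₂ x ≤ g₁ x + g₂ x := le_add_of_nonneg_left (h₁0 x)
  have hs : Measurable fun x => g₁ x + g₂ x := h₁.add h₂
  have L₁ := mul_log_integral_sub_le (μ := μ) h₁ hs h₁0 h₁s hle
  have L₂ := mul_log_integral_sub_le (μ := μ) h₂ hs h₂0 h₂s hle
  beta_reduce at L₁ L₂
  have hint : ∫ x, g₁ x + g₂ x ∂μ = (∫ x, g₁ x ∂μ) + ∫ x, g₂ x ∂μ :=
    integral_add (integrable_of_nonneg_of_le_one h₁ h₁0 fun x => (h₁s x).trans (hle x))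
      (integrable_of_nonneg_of_le_one h₂ h₂0 fun x => (h₂s x).trans (hle x))
  have hlog : ∫ x, (g₁ x + g₂ x) * log (g₁ x + g₂ x) ∂μ =
      (∫ x, g₁ x * log (g₁ x + g₂ x) ∂μ) + ∫ x, g₂ x * log (g₁ x + g₂ x) ∂μ := by
    simp only [add_mul]
    exact integral_add (integrable_mul_log_of_le h₁ hs h₁0 h₁s hle)
      (integrable_mul_log_of_le h₂ hs h₂0 h₂s hle)
  unfold statEntTerm
  rw [hint, hlog, add_mul]
  rw [hint] at L₁ L₂
  linarith

lemma statEntTerm_sum_le [IsFiniteMeasure μ] {ι : Type*} (t : Finset ι) {g : ι → X → ℝ}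
    (hg : ∀ i, Measurable (g i)) (h0 : ∀ i x, 0 ≤ g i x) (h1 : ∀ x, ∑ i ∈ t, g i x ≤ 1) :
    statEntTerm μ (fun x => ∑ i ∈ t, g i x) ≤ ∑ i ∈ t, statEntTerm μ (g i) := by
  induction t using Finset.cons_induction with
  | empty => simp [statEntTerm]
  | cons a t ha ih =>
    simp only [Finset.sum_cons] at h1 ⊢
    have ht x : ∑ i ∈ t, g i x ≤ 1 := (le_add_of_nonneg_left (h0 a x)).trans (h1 x)
    calc statEntTerm μ (fun x => g a x + ∑ i ∈ t, g i x)
        ≤ statEntTerm μ (g a) + statEntTerm μ (fun x => ∑ i ∈ t, g i x) :=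
          statEntTerm_add_le (hg a) (Finset.measurable_sum t fun i _ => hg i) (h0 a)
            (fun x => Finset.sum_nonneg fun i _ => h0 i x) h1
      _ ≤ statEntTerm μ (g a) + ∑ i ∈ t, statEntTerm μ (g i) := by gcongr; exact ih ht

lemma statEntTerm_map [MeasurableSpace Y] {f : X → Y} (hf : Measurable f) {g : Y → ℝ}
    (hg : Measurable g) : statEntTerm (μ.map f) g = statEntTerm μ (fun x => g (f x)) := by
  unfold statEntTerm
  rw [integral_map hf.aemeasurable hg.aestronglyMeasurable,
    integral_map hf.aemeasurable
      (show Measurable fun y => g y * log (g y) from hg.mul (measurable_log.comp hg)).aestronglyMeasurable]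

end StatEntTerm

namespace PartUnity

def Equivalent (P Q : PartUnity X) : Prop :=
  ∃ e : Fin P.n ≃ Fin Q.n, ∀ i, P.f i = Q.f (e i)

lemma Equivalent.trans {P Q R : PartUnity X} (h : P.Equivalent Q) (h' : Q.Equivalent R) :
    P.Equivalent R := by
  obtain ⟨e, he⟩ := h
  obtain ⟨e', he'⟩ := h'
  exact ⟨e.trans e', fun i => (he i).trans (he' (e i))⟩

lemma Equivalent.comp {P Q : PartUnity X} (h : P.Equivalent Q) (T : Y → X) :
    (P.comp T).Equivalent (Q.comp T) := by
  obtain ⟨e, he⟩ := h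
  exact ⟨e, fun i => funext fun y => congrFun (he i) (T y)⟩

lemma Equivalent.join_congr_right {P Q : PartUnity X} (A : PartUnity X) (h : P.Equivalent Q) :
    (A.join P).Equivalent (A.join Q) := by
  obtain ⟨e, he⟩ := h
  refine ⟨finProdFinEquiv.symm.trans (((Equiv.refl (Fin A.n)).prodCongr e).trans
    finProdFinEquiv), fun k => funext fun x => ?_⟩
  simp only [join]
  erw [Equiv.trans_apply, Equiv.trans_apply]
  simp [he]

lemma prod_join_prod_equivalent (A C : PartUnity X) (B D : PartUnity Y) :
    ((A.prod B).join (C.prod D)).Equivalent ((A.join C).prod (B.join D)) := by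
  refine ⟨finProdFinEquiv.symm.trans (((finProdFinEquiv.symm.prodCongr
      finProdFinEquiv.symm).trans ((Equiv.prodProdProdComm (Fin A.n) (Fin B.n) (Fin C.n)
      (Fin D.n)).trans (finProdFinEquiv.prodCongr finProdFinEquiv))).trans
      finProdFinEquiv), fun k => funext fun z => ?_⟩
  simp only [join, prod]
  erw [Equiv.trans_apply, Equiv.trans_apply, Equiv.trans_apply, Equiv.trans_apply]
  simp only [Equiv.prodCongr_apply, Prod.map_fst, Prod.map_snd, Equiv.prodProdProdComm_apply,
    Equiv.symm_apply_apply]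
  ring

lemma dyn_prodMap_equivalent (T : X → X) (S : Y → Y) (Φ : PartUnity X) (Ψ : PartUnity Y) :
    ∀ n, (dyn (Prod.map T S) (Φ.prod Ψ) n).Equivalent ((dyn T Φ n).prod (dyn S Ψ n))
  | 0 => ⟨finCongr (by simp [dyn, triv, prod]), fun _ => funext fun _ => by simp [dyn, triv, prod]⟩
  | n + 1 => ((dyn_prodMap_equivalent T S Φ Ψ n).comp (Prod.map T S)).join_congr_right _ |>.trans
      (prod_join_prod_equivalent Φ ((dyn T Φ n).comp T) Ψ ((dyn S Ψ n).comp S))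

lemma n_dyn (T : X → X) (Φ : PartUnity X) : ∀ n, (dyn T Φ n).n = Φ.n ^ n
  | 0 => rfl
  | n + 1 => by rw [pow_succ', ← n_dyn T Φ n]; rfl

lemma prod_eq_join (A : PartUnity X) (B : PartUnity Y) :
    A.prod B = (A.comp Prod.fst).join (B.comp Prod.snd) := rfl

lemma sum_join {M : Type*} [AddCommMonoid M] (P Q : PartUnity X) (G : (X → ℝ) → M) :
    ∑ k, G ((P.join Q).f k) = ∑ i, ∑ j, G (fun x => P.f i x * Q.f j x) := by
  rw [← Fintype.sum_prod_type']
  exact (Fintype.sum_equiv finProdFinEquiv _ _ fun _ => by simp [join]).symm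

lemma Cont.meas [TopologicalSpace X] [MeasurableSpace X] [OpensMeasurableSpace X]
    {P : PartUnity X} (hP : P.Cont) : P.Meas :=
  fun i => (hP i).measurable

section Meas

variable [MeasurableSpace X] [MeasurableSpace Y]

lemma Meas.comp {P : PartUnity X} (hP : P.Meas) {T : Y → X} (hT : Measurable T) :
    (P.comp T).Meas :=
  fun i => (hP i).comp hT

lemma Meas.join {P Q : PartUnity X} (hP : P.Meas) (hQ : Q.Meas) : (P.join Q).Meas :=
  fun _ => (hP _).mul (hQ _)

lemma Meas.dyn {P : PartUnity X} (hP : P.Meas) {T : X → X} (hT : Measurable T) :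
    ∀ n, (dyn T P n).Meas
  | 0 => fun _ => measurable_const
  | n + 1 => hP.join ((hP.dyn hT n).comp hT)

end Meas

end PartUnity

namespace PartUnity

lemma sum_const_mul_f (P : PartUnity X) (a : ℝ) (x : X) : ∑ i, a * P.f i x = a := by
  rw [← Finset.mul_sum, P.sum_one, mul_one]

lemma sum_f_mul_const (P : PartUnity X) (a : ℝ) (x : X) : ∑ i, P.f i x * a = a := by
  rw [← Finset.sum_mul, P.sum_one, one_mul]

lemma sum_join_mul_log (P Q : PartUnity X) (x : X) :
    ∑ k, (P.join Q).f k x * log ((P.join Q).f k x) =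
      ∑ i, P.f i x * log (P.f i x) + ∑ j, Q.f j x * log (Q.f j x) := by
  have key (a b : ℝ) : a * b * log (a * b) = a * log a * b + a * (b * log b) := by
    have h := negMulLog_mul a b
    simp only [negMulLog] at h
    linarith
  rw [sum_join P Q fun g => g x * log (g x)]
  simp only [key, Finset.sum_add_distrib, Q.sum_const_mul_f]
  rw [Finset.sum_comm (f := fun i j => P.f i x * (Q.f j x * log (Q.f j x)))]
  simp only [P.sum_f_mul_const]

end PartUnity

section StatEnt

open PartUnity

variable [MeasurableSpace X] {μ : Measure X} {P Q : PartUnity X}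

lemma statEnt_eq_sum_statEntTerm (μ : Measure X) (P : PartUnity X) :
    statEnt μ P = ∑ i, statEntTerm μ (P.f i) := rfl

lemma statEnt_congr (h : P.Equivalent Q) : statEnt μ P = statEnt μ Q := by
  obtain ⟨e, he⟩ := h
  exact Fintype.sum_equiv e _ _ fun i => by rw [he]

lemma statEnt_map [MeasurableSpace Y] {μ : Measure Y} {f : Y → X} (hf : Measurable f)
    (hP : P.Meas) : statEnt (μ.map f) P = statEnt μ (P.comp f) := by
  simp only [statEnt_eq_sum_statEntTerm, statEntTerm_map hf (hP _)]
  rfl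

lemma statEnt_eq_add_integral [IsFiniteMeasure μ] (hP : P.Meas) :
    statEnt μ P = -∑ i, (∫ x, P.f i x ∂μ) * log (∫ x, P.f i x ∂μ) +
      ∫ x, ∑ i, P.f i x * log (P.f i x) ∂μ := by
  rw [statEnt, Finset.sum_add_distrib, Finset.sum_neg_distrib, integral_finsetSum _
    fun i _ => integrable_mul_log_of_le (hP i) (hP i) (P.nonneg i) (fun _ => le_rfl) (P.le_one i)]

lemma sum_integral_f [IsProbabilityMeasure μ] (hP : P.Meas) : ∑ i, ∫ x, P.f i x ∂μ = 1 := by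
  rw [← integral_finsetSum _ fun i _ =>
    integrable_of_nonneg_of_le_one (hP i) (P.nonneg i) (P.le_one i)]
  simp [P.sum_one]

lemma statEnt_nonneg [IsProbabilityMeasure μ] (hP : P.Meas) : 0 ≤ statEnt μ P :=
  Finset.sum_nonneg fun i _ => statEntTerm_nonneg (hP i) (P.nonneg i) (P.le_one i)

lemma statEnt_le_log [IsProbabilityMeasure μ] (hP : P.Meas) : statEnt μ P ≤ log P.n := by
  have h := neg_log_card_le_sum_mul_log (fun i => integral_nonneg (P.nonneg i))
    (sum_integral_f (μ := μ) hP)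
  have hlog := Finset.sum_le_sum fun i (_ : i ∈ Finset.univ) =>
    integral_nonpos (μ := μ) fun x => mul_log_nonpos (P.nonneg i x) (P.le_one i x)
  rw [Fintype.card_fin] at h
  rw [statEnt, Finset.sum_add_distrib, Finset.sum_neg_distrib]
  simp only [Finset.sum_const_zero] at hlog
  linarith

lemma statEnt_le_join_left [IsFiniteMeasure μ] (hP : P.Meas) (hQ : Q.Meas) :
    statEnt μ P ≤ statEnt μ (P.join Q) := by
  rw [statEnt_eq_sum_statEntTerm, statEnt_eq_sum_statEntTerm, sum_join P Q (statEntTerm μ)]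
  refine Finset.sum_le_sum fun i _ => ?_
  calc statEntTerm μ (P.f i) = statEntTerm μ fun x => ∑ j, P.f i x * Q.f j x := by
        simp only [Q.sum_const_mul_f]
    _ ≤ _ := statEntTerm_sum_le _ (fun j => (hP i).mul (hQ j))
        (fun j x => mul_nonneg (P.nonneg i x) (Q.nonneg j x))
        (fun x => (Q.sum_const_mul_f _ x).trans_le (P.le_one i x))

lemma statEnt_le_join_right [IsFiniteMeasure μ] (hP : P.Meas) (hQ : Q.Meas) :
    statEnt μ Q ≤ statEnt μ (P.join Q) := by
  rw [statEnt_eq_sum_statEntTerm, statEnt_eq_sum_statEntTerm, sum_join P Q (statEntTerm μ),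
    Finset.sum_comm]
  refine Finset.sum_le_sum fun j _ => ?_
  calc statEntTerm μ (Q.f j) = statEntTerm μ fun x => ∑ i, P.f i x * Q.f j x := by
        simp only [P.sum_f_mul_const]
    _ ≤ _ := statEntTerm_sum_le _ (fun i => (hP i).mul (hQ j))
        (fun i x => mul_nonneg (P.nonneg i x) (Q.nonneg j x))
        (fun x => (P.sum_f_mul_const _ x).trans_le (Q.le_one j x))

lemma statEnt_join_le [IsProbabilityMeasure μ] (hP : P.Meas) (hQ : Q.Meas) :
    statEnt μ (P.join Q) ≤ statEnt μ P + statEnt μ Q := by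
  have hint {R : PartUnity X} (hR : R.Meas) :
      Integrable (fun x => ∑ i, R.f i x * log (R.f i x)) μ :=
    integrable_finsetSum _ fun i _ =>
      integrable_mul_log_of_le (hR i) (hR i) (R.nonneg i) (fun _ => le_rfl) (R.le_one i)
  have hPQ i j : Integrable (fun x => P.f i x * Q.f j x) μ :=
    integrable_of_nonneg_of_le_one ((hP i).mul (hQ j))
      (fun x => mul_nonneg (P.nonneg i x) (Q.nonneg j x))
      (fun x => mul_le_one₀ (P.le_one i x) (Q.nonneg j x) (Q.le_one j x))
  set p := fun i j => ∫ x, P.f i x * Q.f j x ∂μ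
  have hrow i : ∑ j, p i j = ∫ x, P.f i x ∂μ := by
    simp only [p, ← integral_finsetSum _ fun j _ => hPQ i j, Q.sum_const_mul_f]
  have hcol j : ∑ i, p i j = ∫ x, Q.f j x ∂μ := by
    simp only [p, ← integral_finsetSum _ fun i _ => hPQ i j, P.sum_f_mul_const]
  have hshannon := sum_mul_log_marginals_le (p := p)
    (fun i j => integral_nonneg fun x => mul_nonneg (P.nonneg i x) (Q.nonneg j x))
    (by simp only [hrow, sum_integral_f hP])
  rw [statEnt_eq_add_integral (hP.join hQ), statEnt_eq_add_integral hP,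
    statEnt_eq_add_integral hQ, sum_join P Q fun g => (∫ x, g x ∂μ) * log (∫ x, g x ∂μ)]
  simp only [sum_join_mul_log, integral_add (hint hP) (hint hQ)]
  simp only [hrow, hcol] at hshannon
  linarith

end StatEnt

section Product

open PartUnity

variable [MeasurableSpace X] [MeasurableSpace Y] {μ : Measure (X × Y)} [IsProbabilityMeasure μ]
  {A : PartUnity X} {B : PartUnity Y}

lemma statEnt_map_fst_le (hA : A.Meas) (hB : B.Meas) :
    statEnt (μ.map Prod.fst) A ≤ statEnt μ (A.prod B) := by
  rw [statEnt_map measurable_fst hA, prod_eq_join]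
  exact statEnt_le_join_left (hA.comp measurable_fst) (hB.comp measurable_snd)

lemma statEnt_map_snd_le (hA : A.Meas) (hB : B.Meas) :
    statEnt (μ.map Prod.snd) B ≤ statEnt μ (A.prod B) := by
  rw [statEnt_map measurable_snd hB, prod_eq_join]
  exact statEnt_le_join_right (hA.comp measurable_fst) (hB.comp measurable_snd)

lemma statEnt_prod_le (hA : A.Meas) (hB : B.Meas) :
    statEnt μ (A.prod B) ≤ statEnt (μ.map Prod.fst) A + statEnt (μ.map Prod.snd) B := by
  rw [statEnt_map measurable_fst hA, statEnt_map measurable_snd hB, prod_eq_join]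
  exact statEnt_join_le (hA.comp measurable_fst) (hB.comp measurable_snd)

end Product

lemma statEnt_dyn_div_le [MeasurableSpace X] {μ : Measure X} [IsProbabilityMeasure μ]
    {T : X → X} (hT : Measurable T) {Φ : PartUnity X} (hΦ : Φ.Meas) (n : ℕ) :
    statEnt μ (PartUnity.dyn T Φ n) / n ≤ log Φ.n := by
  rcases n.eq_zero_or_pos with rfl | hn
  · simpa using log_natCast_nonneg Φ.n
  rw [div_le_iff₀ (by exact_mod_cast hn), mul_comm, ← log_pow, ← Nat.cast_pow,
    ← PartUnity.n_dyn T Φ n]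
  exact statEnt_le_log (hΦ.dyn hT n)

lemma limsup_le_limsup_of_nonneg {u v : ℕ → ℝ} {C : ℝ} (huv : ∀ n, u n ≤ v n)
    (hu : ∀ n, 0 ≤ u n) (hv : ∀ n, v n ≤ C) : atTop.limsup u ≤ atTop.limsup v :=
  limsup_le_limsup (.of_forall huv) (isBoundedUnder_of ⟨0, hu⟩).isCoboundedUnder_le
    (isBoundedUnder_of ⟨C, hv⟩)

lemma limsup_add_le_of_nonneg {u v : ℕ → ℝ} {Cu Cv : ℝ} (hu : ∀ n, 0 ≤ u n)
    (hv : ∀ n, 0 ≤ v n) (huC : ∀ n, u n ≤ Cu) (hvC : ∀ n, v n ≤ Cv) :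
    atTop.limsup (u + v) ≤ atTop.limsup u + atTop.limsup v :=
  limsup_add_le (isBoundedUnder_of ⟨0, hu⟩) (isBoundedUnder_of ⟨Cu, huC⟩)
    (isBoundedUnder_of ⟨0, hv⟩).isCoboundedUnder_le (isBoundedUnder_of ⟨Cv, hvC⟩)

theorem locEnt_prod_general {X Y : Type*}
    [MetricSpace X] [MeasurableSpace X] [BorelSpace X]
    [MetricSpace Y] [MeasurableSpace Y] [BorelSpace Y]
    (T : X → X) (hT : Continuous T)
    (S : Y → Y) (hS : Continuous S)
    (μ : Measure (X × Y)) [IsProbabilityMeasure μ]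
    (Φ : PartUnity X) (hΦ : Φ.Cont) (Ψ : PartUnity Y) (hΨ : Ψ.Cont) :
    max (locEnt T (μ.map Prod.fst) Φ) (locEnt S (μ.map Prod.snd) Ψ) ≤
      locEnt (Prod.map T S) μ (Φ.prod Ψ) ∧
    locEnt (Prod.map T S) μ (Φ.prod Ψ) ≤
      locEnt T (μ.map Prod.fst) Φ + locEnt S (μ.map Prod.snd) Ψ := by
  have : IsProbabilityMeasure (μ.map Prod.fst) := Measure.isProbabilityMeasure_map (by fun_prop)
  have : IsProbabilityMeasure (μ.map Prod.snd) := Measure.isProbabilityMeasure_map (by fun_prop)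
  have hA := hΦ.meas.dyn hT.measurable
  have hB := hΨ.meas.dyn hS.measurable
  set a := fun n : ℕ => statEnt (μ.map Prod.fst) (PartUnity.dyn T Φ n) / n
  set b := fun n : ℕ => statEnt (μ.map Prod.snd) (PartUnity.dyn S Ψ n) / n
  set e := fun n : ℕ => statEnt μ (PartUnity.dyn (Prod.map T S) (Φ.prod Ψ) n) / n
  have he n : e n = statEnt μ ((PartUnity.dyn T Φ n).prod (PartUnity.dyn S Ψ n)) / n := by
    simp only [e, statEnt_congr (PartUnity.dyn_prodMap_equivalent T S Φ Ψ n)]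
  have hae n : a n ≤ e n := by
    rw [he]; exact div_le_div_of_nonneg_right (statEnt_map_fst_le (hA n) (hB n)) n.cast_nonneg
  have hbe n : b n ≤ e n := by
    rw [he]; exact div_le_div_of_nonneg_right (statEnt_map_snd_le (hA n) (hB n)) n.cast_nonneg
  have heab n : e n ≤ a n + b n := by
    rw [he, ← add_div]; exact div_le_div_of_nonneg_right (statEnt_prod_le (hA n) (hB n)) n.cast_nonneg
  have ha0 n : 0 ≤ a n := div_nonneg (statEnt_nonneg (hA n)) n.cast_nonneg
  have hb0 n : 0 ≤ b n := div_nonneg (statEnt_nonneg (hB n)) n.cast_nonneg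
  have haC := statEnt_dyn_div_le (μ := μ.map Prod.fst) hT.measurable hΦ.meas
  have hbC := statEnt_dyn_div_le (μ := μ.map Prod.snd) hS.measurable hΨ.meas
  have heC n : e n ≤ log Φ.n + log Ψ.n := (heab n).trans (add_le_add (haC n) (hbC n))
  exact ⟨max_le (limsup_le_limsup_of_nonneg hae ha0 heC) (limsup_le_limsup_of_nonneg hbe hb0 heC),
    (limsup_le_limsup_of_nonneg heab (fun n => (ha0 n).trans (hae n))
      fun n => add_le_add (haC n) (hbC n)).trans (limsup_add_le_of_nonneg ha0 hb0 haC hbC)⟩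

/-- Local metric entropy of a product system with respect to a product
partition of unity, compared with the entropies of the marginals. -/
theorem locEnt_prod {X Y : Type*}
    [MetricSpace X] [CompactSpace X] [Nonempty X] [MeasurableSpace X] [BorelSpace X]
    [MetricSpace Y] [CompactSpace Y] [Nonempty Y] [MeasurableSpace Y] [BorelSpace Y]
    (T : X → X) (hT : Continuous T) (hTsurj : Function.Surjective T)
    (S : Y → Y) (hS : Continuous S) (hSsurj : Function.Surjective S)
    (μ : Measure (X × Y)) [IsProbabilityMeasure μ]
    (hμ : MeasurePreserving (Prod.map T S) μ μ)
    (Φ : PartUnity X) (hΦ : Φ.Cont) (Ψ : PartUnity Y) (hΨ : Ψ.Cont) :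
    max (locEnt T (μ.map Prod.fst) Φ) (locEnt S (μ.map Prod.snd) Ψ) ≤
      locEnt (Prod.map T S) μ (Φ.prod Ψ) ∧
    locEnt (Prod.map T S) μ (Φ.prod Ψ) ≤
      locEnt T (μ.map Prod.fst) Φ + locEnt S (μ.map Prod.snd) Ψ :=
  locEnt_prod_general T hT S hS μ Φ hΦ Ψ hΨ
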